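/- arXiv:2308.01968 — 7 statements merged into one kernel-verified Lean document; each statement's English description precedes it below -/
import Mathlib

section
/- For any involution h and any element g of a group G, and any natural number n ≥ 1, the iterated commutator satisfies [g,_{n+1} h] = [g,h]^{(-2)^n}, where [g,_1 h] = [g,h] and [g,_{k+1} h] = [[g,_k h], h]. -/
/-- The commutator `[x, y] = x⁻¹ y⁻¹ x y`. -/
def pcomm {G : Type*} [Group G] (x y : G) : G := x⁻¹ * y⁻¹ * x * y

/-- The iterated (Engel) commutator `[g,_n h]`: `[g,_0 h] = g`,
`[g,_{n+1} h] = [[g,_n h], h]`. -/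
def engel {G : Type*} [Group G] (g h : G) : ℕ → G
  | 0 => g
  | n + 1 => pcomm (engel g h n) h

/-!
Conjugation by an involution `h` inverts `c = [g, h]`, so `[c ^ k, h] = c ^ (-k) * c ^ (-k) = c ^ (-2k)`:
each further commutation with `h` multiplies the exponent by `-2`.
-/

section

variable {G : Type*} [Group G]

theorem inv_mul_pcomm_mul_eq_inv {g h : G} (hh : h ^ 2 = 1) :
    h⁻¹ * pcomm g h * h = (pcomm g h)⁻¹ := by
  have hmul : h * h = 1 := by rw [← sq, hh]
  have hinv : h⁻¹ = h := inv_eq_of_mul_eq_one_right hmul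
  simp [pcomm, hinv, mul_assoc, hmul]

theorem pcomm_zpow_of_inv_mul_mul_eq_inv {x h : G} (hx : h⁻¹ * x * h = x⁻¹) (k : ℤ) :
    pcomm (x ^ k) h = x ^ (-2 * k) := by
  have hxk : h⁻¹ * x ^ k * h = x ^ (-k) := by
    have := conj_zpow (a := h⁻¹) (b := x) (i := k)
    rw [inv_inv, hx, inv_zpow'] at this
    exact this.symm
  calc pcomm (x ^ k) h = (x ^ k)⁻¹ * (h⁻¹ * x ^ k * h) := by simp only [pcomm, mul_assoc]
    _ = x ^ (-k) * x ^ (-k) := by rw [hxk, zpow_neg]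
    _ = x ^ (-2 * k) := by rw [← zpow_add]; ring_nf

theorem engel_succ_eq_pcomm_zpow {g h : G} (hh : h ^ 2 = 1) (n : ℕ) :
    engel g h (n + 1) = pcomm g h ^ ((-2 : ℤ) ^ n) := by
  induction n with
  | zero => simp [engel]
  | succ n ih =>
    rw [engel, ih, pcomm_zpow_of_inv_mul_mul_eq_inv (inv_mul_pcomm_mul_eq_inv hh), pow_succ',
      mul_comm]

end

theorem stmt0_general {G : Type*} [Group G] (g h : G) (hh : h ^ 2 = 1) (n : ℕ) :
    engel g h (n + 1) = pcomm g h ^ ((-2 : ℤ) ^ n) :=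
  engel_succ_eq_pcomm_zpow hh n

/-- For any involution `h` and any `g` in a group `G`, and any `n ≥ 1`,
`[g,_{n+1} h] = [g,h]^{(-2)^n}`. -/
theorem stmt0 {G : Type*} [Group G] (g h : G) (hh : h ^ 2 = 1) (n : ℕ) (hn : 1 ≤ n) :
    engel g h (n + 1) = pcomm g h ^ ((-2 : ℤ) ^ n) :=
  stmt0_general g h hh n
end

section
/- In a group G in which every element has order dividing 2^k for some fixed k (a 2-group of bounded exponent), every involution h is a left Engel element: for every g ∈ G there exists n such that [g,_n h] = 1. -/
section

variable {G : Type*} [Group G]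

theorem engel_succ' (g h : G) (n : ℕ) : engel g h (n + 1) = engel (pcomm g h) h n := by
  induction n with
  | zero => rfl
  | succ n ih => exact congrArg (pcomm · h) ih

theorem conj_pcomm_of_sq_eq_one {h : G} (hh : h ^ 2 = 1) (g : G) :
    h⁻¹ * pcomm g h * h = (pcomm g h)⁻¹ := by
  have hhh : h * h = 1 := by rw [← sq, hh]
  simp only [pcomm, inv_eq_of_mul_eq_one_right hhh, mul_inv_rev, inv_inv, mul_assoc, hhh,
    mul_one]

theorem conj_zpow_of_conj_eq_inv {a h : G} (ha : h⁻¹ * a * h = a⁻¹) (z : ℤ) :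
    h⁻¹ * a ^ z * h = (a ^ z)⁻¹ := by
  simpa [ha, inv_zpow] using (conj_zpow (a := h⁻¹) (b := a) (i := z)).symm

theorem pcomm_of_conj_eq_inv {x h : G} (hx : h⁻¹ * x * h = x⁻¹) : pcomm x h = x ^ (-2 : ℤ) := by
  calc pcomm x h = x⁻¹ * (h⁻¹ * x * h) := by simp only [pcomm, mul_assoc]
    _ = x ^ (-2 : ℤ) := by rw [hx, ← mul_inv_rev, ← sq, zpow_neg, zpow_ofNat]

theorem engel_of_conj_eq_inv {a h : G} (ha : h⁻¹ * a * h = a⁻¹) (n : ℕ) :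
    engel a h n = a ^ ((-2 : ℤ) ^ n) := by
  induction n with
  | zero => simp [engel]
  | succ n ih =>
    rw [engel, ih, pcomm_of_conj_eq_inv (conj_zpow_of_conj_eq_inv ha _), ← zpow_mul, pow_succ]

theorem zpow_neg_two_pow_eq_one {x : G} {k : ℕ} (hx : x ^ (2 ^ k) = 1) :
    x ^ ((-2 : ℤ) ^ k) = 1 := by
  rw [← orderOf_dvd_iff_zpow_eq_one]
  exact (Int.natCast_dvd_natCast.mpr (orderOf_dvd_of_pow_eq_one hx)).trans
    (by simpa using pow_dvd_pow_of_dvd (dvd_neg.mpr dvd_rfl : (2 : ℤ) ∣ -2) k)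

end

/-- In a group in which every element has order dividing `2^k` (a `2`-group of
bounded exponent), every involution `h` is a left Engel element: for every `g`
there exists `n` with `[g,_n h] = 1`. -/
theorem stmt1 {G : Type*} [Group G] (k : ℕ) (hexp : ∀ x : G, x ^ (2 ^ k) = 1)
    (h : G) (hh : h ^ 2 = 1) :
    ∀ g : G, ∃ n : ℕ, engel g h n = 1 := by
  intro g
  refine ⟨k + 1, ?_⟩
  rw [engel_succ', engel_of_conj_eq_inv (conj_pcomm_of_sq_eq_one hh g)]
  exact zpow_neg_two_pow_eq_one (hexp _)
end

section
/- Let G and T be groups with T acting on a finite set X, and let W = G ≀_X T be the wreath product (base group G^X). Let g = (g_x), h_1 = (h_{1,x}), …, h_k = (h_{k,x}) ∈ G^X and t_1,…,t_k ∈ T. For any x' ∈ X denote by O(x') the orbit of x' under ⟨t_1,…,t_k⟩. Then for any m, the iterated identity w_{∘m}(g, h_1 t_1, …, h_k t_k) = 1 in W if and only if for every x' ∈ X, w_{∘m}((g_x)_{x∈O(x')}, (h_{1,x})_{x∈O(x')} t_1, …, (h_{k,x})_{x∈O(x')} t_k) = 1 in G ≀_{O(x')} ⟨t_1,…,t_k⟩,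 provided T is an n-Engel-w group and m ≥ n. -/
/-- The word map defined by `w ∈ F_{k+1}`. -/
def wApply {G : Type*} [Group G] {k : ℕ} (w : FreeGroup (Fin (k + 1))) (g : G)
    (h : Fin k → G) : G :=
  FreeGroup.lift (Fin.cases g h) w

/-- The Engel-type iterated identity. -/
def wIter {G : Type*} [Group G] {k : ℕ} (w : FreeGroup (Fin (k + 1))) :
    ℕ → G → (Fin k → G) → G
  | 0, g, _ => g
  | n + 1, g, h => wApply w (wIter w n g h) h

/-- The permutation action of the top group on the base group `G^X` of the
permutational wreath product. -/
def wreathφ (G T X : Type*) [Group G] [Group T] [MulAction T X] :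
    T →* MulAut (X → G) where
  toFun t :=
    { toFun := fun f x => f (t⁻¹ • x)
      invFun := fun f x => f (t • x)
      left_inv := fun f => funext fun x => by simp
      right_inv := fun f => funext fun x => by simp
      map_mul' := fun f g => rfl }
  map_one' := MulEquiv.ext fun f => funext fun x => by simp
  map_mul' := fun a b => MulEquiv.ext fun f => funext fun x => by
    simp [mul_smul]

/-- The permutational wreath product `G ≀_X T = G^X ⋊ T`. -/
abbrev Wreath (G T X : Type*) [Group G] [Group T] [MulAction T X] :=
  (X → G) ⋊[wreathφ G T X] T

/-
The top component of `w_{∘m}(g, h₁t₁, …, h_kt_k)` is `w_{∘m}(1, t₁, …, t_k)`, which is trivial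
because `T`, hence its subgroup `⟨t₁, …, t_k⟩`, is also `m`-Engel-`w` for `m ≥ n`. So the element
is the image, under the inclusion `G ≀_X ⟨t⟩ ↪ G ≀_X T`, of a base element `f : X → G`, and
`f = 1` iff its restriction to every `⟨t⟩`-orbit is trivial. Both the inclusion and the
restrictions to orbits are homomorphisms, so they commute with the word map `w_{∘m}`.
-/

section WordMaps

variable {G H : Type*} [Group G] [Group H] {k : ℕ} (w : FreeGroup (Fin (k + 1)))

theorem map_wApply (φ : G →* H) (g : G) (h : Fin k → G) :
    φ (wApply w g h) = wApply w (φ g) (fun i => φ (h i)) := by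
  rw [wApply, wApply, ← MonoidHom.comp_apply]
  congr 1
  refine FreeGroup.ext_hom _ _ fun i => ?_
  cases i using Fin.cases <;> simp

theorem map_wIter (φ : G →* H) (m : ℕ) (g : G) (h : Fin k → G) :
    φ (wIter w m g h) = wIter w m (φ g) (fun i => φ (h i)) := by
  induction m with
  | zero => rfl
  | succ m ih => simp only [wIter, map_wApply, ih]

theorem wIter_add (a b : ℕ) (g : G) (h : Fin k → G) :
    wIter w (a + b) g h = wIter w b (wIter w a g h) h := by
  induction b with
  | zero => rfl
  | succ b ih => rw [← Nat.add_assoc, wIter, wIter, ih]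

variable {w}

theorem wIter_eq_one_of_le {n m : ℕ} (hn : ∀ (g : G) (h : Fin k → G), wIter w n g h = 1)
    (hnm : n ≤ m) (g : G) (h : Fin k → G) : wIter w m g h = 1 := by
  obtain ⟨d, rfl⟩ := Nat.exists_eq_add_of_le' hnm
  rw [wIter_add, hn]

theorem wIter_eq_one_of_injective {φ : G →* H} (hφ : Function.Injective φ) {m : ℕ}
    (hH : ∀ (g : H) (h : Fin k → H), wIter w m g h = 1) (g : G) (h : Fin k → G) :
    wIter w m g h = 1 :=
  hφ <| by rw [map_wIter, hH, map_one]

end WordMaps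

namespace Wreath

open SemidirectProduct

variable {G S T X Y : Type*} [Group G] [Group S] [Group T] [MulAction S X] [MulAction T Y]

def map (f : S →* T) (p : Y → X) (hp : ∀ (s : S) (y : Y), p (f s • y) = s • p y) :
    Wreath G S X →* Wreath G T Y :=
  SemidirectProduct.map (MonoidHom.pi fun y => Pi.evalMonoidHom (fun _ => G) (p y)) f
    fun s => MonoidHom.ext fun u => funext fun y => by
      change u (s⁻¹ • p y) = u (p ((f s)⁻¹ • y))
      rw [← map_inv, hp]

variable (f : S →* T) (p : Y → X) (hp : ∀ (s : S) (y : Y), p (f s • y) = s • p y)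

@[simp]
theorem map_inl (u : X → G) : map f p hp (inl u) = inl fun y => u (p y) :=
  SemidirectProduct.map_inl _ _ _ u

@[simp]
theorem map_inr (s : S) : (map f p hp (inr s) : Wreath G T Y) = inr (f s) :=
  SemidirectProduct.map_inr _ _ _ s

theorem map_injective (hf : Function.Injective f) (hp_surj : Function.Surjective p) :
    Function.Injective (map f p hp : Wreath G S X →* Wreath G T Y) := by
  intro a b hab
  ext x
  · obtain ⟨y, rfl⟩ := hp_surj x
    exact congrFun (congrArg SemidirectProduct.left hab) y
  · exact hf (congrArg SemidirectProduct.right hab)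

def ofSubgroup (S : Subgroup T) : Wreath G S Y →* Wreath G T Y :=
  map S.subtype id fun _ _ => rfl

@[simp]
theorem ofSubgroup_inl (S : Subgroup T) (u : Y → G) : ofSubgroup S (inl u) = inl u :=
  map_inl _ _ _ u

@[simp]
theorem ofSubgroup_inr (S : Subgroup T) (s : S) :
    (ofSubgroup S (inr s) : Wreath G T Y) = inr (s : T) :=
  map_inr _ _ _ s

theorem ofSubgroup_injective (S : Subgroup T) :
    Function.Injective (ofSubgroup S : Wreath G S Y →* Wreath G T Y) :=
  map_injective _ _ _ S.subtype_injective Function.surjective_id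

abbrev restrictOrbit (x : X) : Wreath G S X →* Wreath G S (MulAction.orbit S x) :=
  map (MonoidHom.id S) Subtype.val fun _ _ => MulAction.orbit.coe_smul

theorem eq_one_iff_forall_restrictOrbit_eq_one {e : Wreath G S X} (he : e.right = 1) :
    e = 1 ↔ ∀ x, restrictOrbit x e = 1 := by
  refine ⟨fun h x => by rw [h, map_one], fun h => ?_⟩
  ext x
  · exact congrFun (congrArg SemidirectProduct.left (h x)) ⟨x, MulAction.mem_orbit_self x⟩
  · exact he

end Wreath

theorem stmt6_general {k : ℕ} (w : FreeGroup (Fin (k + 1))) (G T X : Type*) [Group G] [Group T]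
    [MulAction T X] (n m : ℕ)
    (hT : ∀ (x : T) (y : Fin k → T), wIter w n x y = 1) (hmn : n ≤ m)
    (g : X → G) (h : Fin k → X → G) (t : Fin k → T) :
    wIter w m (SemidirectProduct.inl g : Wreath G T X)
        (fun i => SemidirectProduct.inl (h i) * SemidirectProduct.inr (t i)) = 1 ↔
      ∀ x' : X,
        wIter w m
          (SemidirectProduct.inl
              (fun y : MulAction.orbit (Subgroup.closure (Set.range t)) x' => g y) :
            Wreath G (Subgroup.closure (Set.range t))
              (MulAction.orbit (Subgroup.closure (Set.range t)) x'))
          (fun i =>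
            (SemidirectProduct.inl (fun y : MulAction.orbit (Subgroup.closure (Set.range t)) x' => h i y) :
              Wreath G (Subgroup.closure (Set.range t))
                (MulAction.orbit (Subgroup.closure (Set.range t)) x')) *
              SemidirectProduct.inr
                (⟨t i, Subgroup.subset_closure (Set.mem_range_self i)⟩ :
                  Subgroup.closure (Set.range t))) = 1 := by
  set s : Fin k → Subgroup.closure (Set.range t) :=
    fun i => ⟨t i, Subgroup.subset_closure (Set.mem_range_self i)⟩
  set e : Wreath G (Subgroup.closure (Set.range t)) X := wIter w m (SemidirectProduct.inl g)
    (fun i => SemidirectProduct.inl (h i) * SemidirectProduct.inr (s i))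
  have he : e.right = 1 := by
    rw [← SemidirectProduct.rightHom_eq_right, map_wIter]
    exact wIter_eq_one_of_injective (Subgroup.subtype_injective _) (wIter_eq_one_of_le hT hmn) _ _
  have h_incl : Wreath.ofSubgroup _ e = wIter w m (SemidirectProduct.inl g : Wreath G T X)
      (fun i => SemidirectProduct.inl (h i) * SemidirectProduct.inr (t i)) := by
    simp only [e, s, map_wIter, map_mul, Wreath.ofSubgroup_inl, Wreath.ofSubgroup_inr]
  rw [← h_incl, (Wreath.ofSubgroup_injective _).eq_iff' (map_one _),
    Wreath.eq_one_iff_forall_restrictOrbit_eq_one he]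
  simp only [e, s, map_wIter, map_mul, Wreath.map_inl, Wreath.map_inr, MonoidHom.id_apply]

/-- Checking the iterated identity `w_{∘m}` on elements `g·(h₁t₁)⋯` of a wreath
product `G ≀_X T` (with `T` an `n`-Engel-`w` group and `m ≥ n`) reduces to
checking it on each orbit of `X` under `⟨t₁, …, t_k⟩`. -/
theorem stmt6 {k : ℕ} (w : FreeGroup (Fin (k + 1))) (G T X : Type*) [Group G] [Group T]
    [Fintype X] [MulAction T X] (n m : ℕ)
    (hT : ∀ (x : T) (y : Fin k → T), wIter w n x y = 1) (hmn : n ≤ m)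
    (g : X → G) (h : Fin k → X → G) (t : Fin k → T) :
    wIter w m (SemidirectProduct.inl g : Wreath G T X)
        (fun i => SemidirectProduct.inl (h i) * SemidirectProduct.inr (t i)) = 1 ↔
      ∀ x' : X,
        wIter w m
          (SemidirectProduct.inl
              (fun y : MulAction.orbit (Subgroup.closure (Set.range t)) x' => g y) :
            Wreath G (Subgroup.closure (Set.range t))
              (MulAction.orbit (Subgroup.closure (Set.range t)) x'))
          (fun i =>
            (SemidirectProduct.inl (fun y : MulAction.orbit (Subgroup.closure (Set.range t)) x' => h i y) :
              Wreath G (Subgroup.closure (Set.range t))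
                (MulAction.orbit (Subgroup.closure (Set.range t)) x')) *
              SemidirectProduct.inr
                (⟨t i, Subgroup.subset_closure (Set.mem_range_self i)⟩ :
                  Subgroup.closure (Set.range t))) = 1 :=
  stmt6_general w G T X n m hT hmn g h t
end

section
/- Let p be a prime, r ∈ ℕ, and let C = ⟨σ⟩ be a cyclic group of order p^r acting faithfully and transitively on X = {1,…,p^r}. Let G be a group and W = G ≀_X C. Suppose g_1,…,g_{p^r}, h_1,…,h_{p^r} ∈ G pairwise commute and each g_i has order dividing p. Then [(g_x)_{x∈X},_{p^r} (h_x)_{x∈X} σ] = 1 in W, where [a,_n b] denotes the n-fold iterated commutator. -/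
/-!
Commutation with `h σ` acts on base elements `f` whose entries commute with those of `h` as the
difference operator `Δ f = f⁻¹ · (f ∘ σ)`. The entries of `g` generate an abelian subgroup `A`
centralizing the entries of `h`, and on `A^X` the operator `Δ` is `S - 1` in the endomorphism ring,
`S` being the shift by `σ`. As `S^(p^r) = 1`, the binomial theorem gives
`(S - 1)^(p^r) = S^(p^r) - 1 + p t = p t`, which kills `g` because `g^p = 1`.
-/

def shiftDiff {G C X : Type*} [Group G] [SMul C X] (σ : C) (f : X → G) : X → G :=
  fun x => (f x)⁻¹ * f (σ • x)

lemma map_comp_shiftDiff {G H C X : Type*} [Group G] [Group H] [SMul C X] (φ : G →* H)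
    (σ : C) (f : X → G) : φ ∘ shiftDiff σ f = shiftDiff σ (φ ∘ f) := by
  funext x
  simp [shiftDiff]

lemma exists_sub_one_pow_prime_pow_eq_mul_natCast {R : Type*} [Ring R] {p : ℕ} (hp : p.Prime)
    {s : R} {n : ℕ} (hs : s ^ p ^ n = 1) : ∃ t : R, (s - 1) ^ p ^ n = t * p := by
  obtain ⟨t, ht⟩ := (Commute.one_right (s - 1)).exists_add_pow_prime_pow_eq hp n
  refine ⟨-((s - 1) * t), ?_⟩
  rw [sub_add_cancel, hs, one_pow, mul_one] at ht
  rw [← Nat.cast_comm, mul_neg, ← mul_assoc, eq_neg_iff_add_eq_zero]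
  rwa [eq_comm, add_right_comm, add_eq_right] at ht

lemma AddMonoid.End.sub_one_pow_prime_pow_apply_eq_zero {V : Type*} [AddCommGroup V] {p : ℕ}
    (hp : p.Prime) {s : AddMonoid.End V} {n : ℕ} (hs : s ^ p ^ n = 1) {v : V}
    (hv : p • v = 0) : ((s - 1) ^ p ^ n) v = 0 := by
  obtain ⟨t, ht⟩ := exists_sub_one_pow_prime_pow_eq_mul_natCast hp hs
  rw [ht, AddMonoid.End.coe_mul, Function.comp_apply, AddMonoid.End.natCast_apply, hv, map_zero]

-- `Additive` turns the endomorphisms of the commutative group `X → M` into a ring.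
def shiftEnd {M C X : Type*} [CommGroup M] [SMul C X] (σ : C) :
    AddMonoid.End (Additive (X → M)) where
  toFun f := Additive.ofMul fun x => f.toMul (σ • x)
  map_zero' := rfl
  map_add' _ _ := rfl

lemma shiftEnd_pow_apply {M C X : Type*} [CommGroup M] [Monoid C] [MulAction C X] (σ : C)
    (k : ℕ) (f : Additive (X → M)) :
    (shiftEnd σ ^ k) f = Additive.ofMul fun x => f.toMul (σ ^ k • x) := by
  induction k generalizing f with
  | zero => simp
  | succ k ih =>
    rw [pow_succ, AddMonoid.End.coe_mul, Function.comp_apply, ih]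
    simp only [pow_succ', mul_smul]
    rfl

lemma shiftDiff_iterate_eq_toMul {M C X : Type*} [CommGroup M] [SMul C X] (σ : C) (n : ℕ)
    (f : X → M) :
    (shiftDiff σ)^[n] f =
      (((shiftEnd σ - 1) ^ n : AddMonoid.End (Additive (X → M))) (Additive.ofMul f)).toMul := by
  rw [AddMonoid.End.coe_pow]
  refine (Function.Semiconj.iterate_right (f := Additive.toMul) (fun a => ?_) n _).symm
  funext x
  change (Additive.toMul (shiftEnd σ a - a)) x = _
  rw [toMul_sub, Pi.div_apply, div_eq_inv_mul]
  rfl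

lemma shiftDiff_iterate_prime_pow_eq_one {M C X : Type*} [CommGroup M] [Monoid C] [MulAction C X]
    {p r : ℕ} (hp : p.Prime) {σ : C} (hσ : σ ^ p ^ r = 1) {f : X → M} (hf : ∀ x, f x ^ p = 1) :
    (shiftDiff σ)^[p ^ r] f = 1 := by
  have hs : shiftEnd (M := M) (X := X) σ ^ p ^ r = 1 := by
    ext f x
    simp [shiftEnd_pow_apply, hσ]
  have hv : p • Additive.ofMul f = 0 := congrArg Additive.ofMul (funext hf)
  rw [shiftDiff_iterate_eq_toMul, AddMonoid.End.sub_one_pow_prime_pow_apply_eq_zero hp hs hv]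
  rfl

section Wreath

variable {G C X : Type*} [Group G] [Group C] [MulAction C X]

open SemidirectProduct

@[simp] lemma wreathφ_apply (c : C) (f : X → G) (x : X) : wreathφ G C X c f x = f (c⁻¹ • x) :=
  rfl

lemma pcomm_inl_inl_mul_inr {f h : X → G} (hfh : ∀ x, Commute (f x) (h x)) (σ : C) :
    pcomm (inl f : Wreath G C X) (inl h * inr σ) = inl (shiftDiff σ f) := by
  ext x
  · simp [pcomm, shiftDiff, ← map_inv, mul_assoc, (hfh (σ • x)).eq]
  · simp [pcomm]

lemma engel_inl_inl_mul_inr {A : Subgroup G} {h : X → G} (hA : ∀ a ∈ A, ∀ x, Commute a (h x))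
    (f : X → A) (σ : C) (n : ℕ) :
    engel (inl (A.subtype ∘ f) : Wreath G C X) (inl h * inr σ) n
      = inl (A.subtype ∘ (shiftDiff σ)^[n] f) := by
  induction n with
  | zero => rfl
  | succ n ih =>
    rw [engel, ih, pcomm_inl_inl_mul_inr (f := A.subtype ∘ _) (fun x => hA _ (SetLike.coe_mem _) x),
      Function.iterate_succ_apply', map_comp_shiftDiff]

end Wreath

theorem stmt7_general (p r : ℕ) (hp : p.Prime) (G : Type*) [Group G] (C : Type*) [Group C]
    (X : Type*) [MulAction C X]
    (σ : C) (hord : orderOf σ = p ^ r)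
    (g h : X → G)
    (hcomm : ∀ a b : X, Commute (g a) (g b) ∧ Commute (g a) (h b) ∧ Commute (h a) (h b))
    (hordg : ∀ x : X, g x ^ p = 1) :
    engel (SemidirectProduct.inl g : Wreath G C X)
      (SemidirectProduct.inl h * SemidirectProduct.inr σ) (p ^ r) = 1 := by
  let A := Subgroup.closure (Set.range g)
  have : IsMulCommutative A := Subgroup.isMulCommutative_closure <| by
    rintro _ ⟨a, rfl⟩ _ ⟨b, rfl⟩
    exact (hcomm a b).1
  have hA : ∀ a ∈ A, ∀ x, Commute a (h x) := fun a ha x => by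
    refine (Subgroup.closure_le (Subgroup.centralizer {h x}) |>.2 ?_ ha (h x) rfl).symm
    rintro _ ⟨y, rfl⟩ _ rfl
    exact ((hcomm y x).2.1).symm
  let g' : X → A := fun x => ⟨g x, Subgroup.subset_closure ⟨x, rfl⟩⟩
  have hσ : σ ^ p ^ r = 1 := hord ▸ pow_orderOf_eq_one σ
  open scoped IsMulCommutative in
  rw [show g = A.subtype ∘ g' from rfl, engel_inl_inl_mul_inr hA,
    shiftDiff_iterate_prime_pow_eq_one hp hσ fun x => Subtype.ext (hordg x)]
  rfl

/-- Let `C = ⟨σ⟩` be cyclic of order `p^r` acting faithfully and transitively on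
a set `X` of size `p^r`, and `W = G ≀_X C`. If `g_x, h_x ∈ G` (`x ∈ X`) pairwise
commute and each `g_x` has order dividing `p`, then
`[(g_x)_x,_{p^r} (h_x)_x σ] = 1` in `W`. -/
theorem stmt7 (p r : ℕ) (hp : p.Prime) (G : Type*) [Group G] (C : Type*) [Group C]
    (X : Type*) [Fintype X] [MulAction C X] [FaithfulSMul C X]
    (htrans : MulAction.IsPretransitive C X) (hcard : Fintype.card X = p ^ r)
    (σ : C) (hgen : ∀ c : C, c ∈ Subgroup.zpowers σ) (hord : orderOf σ = p ^ r)
    (g h : X → G)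
    (hcomm : ∀ a b : X, Commute (g a) (g b) ∧ Commute (g a) (h b) ∧ Commute (h a) (h b))
    (hordg : ∀ x : X, g x ^ p = 1) :
    engel (SemidirectProduct.inl g : Wreath G C X)
      (SemidirectProduct.inl h * SemidirectProduct.inr σ) (p ^ r) = 1 :=
  stmt7_general p r hp G C X σ hord g h hcomm hordg
end

section
/- Let G be a group, X = {1,…,m} with σ the m-cycle acting on X, and W = G ≀_X ⟨σ⟩. For any g ∈ G, n ∈ ℕ, and coordinate j ∈ X, the j-th component of the iterated commutator [(g, 1, …, 1),_n σ] in the base group equals a product of powers of g of the form ∏_i g^{(±1)·binom(n, index)} with exponents given by signed binomial coefficients; in particular, if g has order p and m = p^r, then [(g⁻¹, 1, …, 1),_{p^r} σ] = 1. -/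
/-!
In the base group, commutation with the translation `σ : x ↦ x + 1` sends `x ↦ g ^ a x` to
`x ↦ g ^ (a (x + 1) - a x)`, so `[(g, 1, …, 1),_n σ]` has exponent vector `Δⁿ δ₀`, the `n`-th
forward difference of the indicator of `0`. Newton's formula
`Δⁿ f y = ∑ₖ (-1)^(n-k) (n choose k) f (y + k)` gives the signed binomial exponents. For
`n = p ^ r` all middle binomials vanish mod `p`, so `Δ^(p^r) f y ≡ f (y + p ^ r) - f y`, which is
`0` on `ℤ/p^rℤ`; hence every exponent is divisible by `p`, while `g ^ p = 1`.
-/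

open Finset
open scoped fwdDiff

lemma pcomm_inl_inr {N T : Type*} [Group N] [Group T] (φ : T →* MulAut N) (f : N) (t : T) :
    pcomm (SemidirectProduct.inl f : N ⋊[φ] T) (SemidirectProduct.inr t) =
      SemidirectProduct.inl (f⁻¹ * φ t⁻¹ f) := by
  ext <;> simp [pcomm]

lemma List.prod_map_zpow_eq_zpow_sum {G α : Type*} [Group G] (g : G) (e : α → ℤ) (L : List α) :
    (L.map fun k => g ^ e k).prod = g ^ (L.map e).sum := by
  induction L with
  | nil => simp
  | cons k L ih => simp [ih, zpow_add]

section Wreath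

variable {G X : Type*} [Group G] [AddCommGroup X]

lemma pcomm_inl_zpow_inr_ofAdd (g : G) (a : X → ℤ) (h : X) :
    pcomm (SemidirectProduct.inl (fun x => g ^ a x) : Wreath G (Multiplicative X) X)
        (SemidirectProduct.inr (Multiplicative.ofAdd h)) =
      SemidirectProduct.inl (fun x => g ^ Δ_[h] a x) := by
  rw [pcomm_inl_inr]
  congr 1
  funext x
  simp [wreathφ, fwdDiff, add_comm h x, sub_eq_neg_add, zpow_add]

lemma engel_inl_zpow_inr_ofAdd (g : G) (a : X → ℤ) (h : X) (n : ℕ) :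
    engel (SemidirectProduct.inl (fun x => g ^ a x) : Wreath G (Multiplicative X) X)
        (SemidirectProduct.inr (Multiplicative.ofAdd h)) n =
      SemidirectProduct.inl (fun x => g ^ ((Δ_[h])^[n] a x)) := by
  induction n with
  | zero => rfl
  | succ n ih => rw [engel, ih, pcomm_inl_zpow_inr_ofAdd, Function.iterate_succ_apply']

lemma engel_inl_single_inr_ofAdd [DecidableEq X] (g : G) (h : X) (n : ℕ) :
    engel (SemidirectProduct.inl (fun x => if x = 0 then g else 1) : Wreath G (Multiplicative X) X)
        (SemidirectProduct.inr (Multiplicative.ofAdd h)) n =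
      SemidirectProduct.inl
        (fun x => g ^ ((Δ_[h])^[n] (fun y => if y = 0 then (1 : ℤ) else 0) x)) := by
  rw [← engel_inl_zpow_inr_ofAdd]
  congr 3
  funext x
  split_ifs <;> simp

end Wreath

lemma fwdDiff_iter_indicator_eq_sum {M : Type*} [AddCommGroup M] [DecidableEq M] (h : M) (n : ℕ)
    (y : M) :
    (Δ_[h])^[n] (fun x => if x = 0 then (1 : ℤ) else 0) y =
      ∑ k ∈ (range (n + 1)).filter (fun k => y + k • h = 0), (-1) ^ (n - k) * (n.choose k : ℤ) := by
  rw [fwdDiff_iter_eq_sum_shift, sum_filter]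
  refine sum_congr rfl fun k _ => ?_
  by_cases hk : y + k • h = 0 <;> simp [hk]

/-- The forward-difference analogue of the Frobenius identity `(S - 1) ^ p ^ r = S ^ p ^ r - 1`
in characteristic `p`. -/
lemma fwdDiff_iter_prime_pow_modEq {M : Type*} [AddCommMonoid M] {p : ℕ} (hp : p.Prime) (r : ℕ)
    (h : M) (f : M → ℤ) (y : M) :
    (Δ_[h])^[p ^ r] f y ≡ f (y + p ^ r • h) - f y [ZMOD p] := by
  have := Fact.mk hp
  have hpr : 0 < p ^ r := pow_pos hp.pos r
  rw [← ZMod.intCast_eq_intCast_iff, fwdDiff_iter_eq_sum_shift, sum_range_succ,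
    ← Nat.sub_add_cancel hpr, sum_range_succ', Nat.sub_add_cancel hpr]
  have middle : ∀ k ∈ range (p ^ r - 1),
      ((((-1 : ℤ) ^ (p ^ r - (k + 1)) * ((p ^ r).choose (k + 1) : ℤ)) • f (y + (k + 1) • h) : ℤ)
        : ZMod p) = 0 := by
    intro k hk
    have hdvd := hp.dvd_choose_pow (n := r) k.succ_ne_zero (by simp at hk; omega)
    simp [(ZMod.natCast_eq_zero_iff _ _).2 hdvd]
  push_cast [sum_eq_zero middle]
  -- Fermat gives `(-1) ^ p ^ r = -1` in `ZMod p`, uniformly in `p` (including `p = 2`).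
  simp [ZMod.pow_card_pow]
  ring

lemma prime_dvd_fwdDiff_iter_prime_pow {p : ℕ} (hp : p.Prime) (r : ℕ) (f : ZMod (p ^ r) → ℤ)
    (y : ZMod (p ^ r)) : (p : ℤ) ∣ (Δ_[1])^[p ^ r] f y := by
  have h := fwdDiff_iter_prime_pow_modEq hp r 1 f y
  rw [nsmul_one, ZMod.natCast_self, add_zero, sub_self] at h
  exact Int.modEq_zero_iff_dvd.1 h

theorem stmt8_general (m : ℕ) (G : Type*) [Group G] (g : G) :
    (∀ (n : ℕ) (j : ZMod m), ∃ (s : ℕ) (ks : Fin s → ℕ) (ε : Fin s → ℤ),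
      (∀ i, ε i = 1 ∨ ε i = -1) ∧
      (engel
          (SemidirectProduct.inl (fun x : ZMod m => if x = 0 then g else 1) :
            Wreath G (Multiplicative (ZMod m)) (ZMod m))
          (SemidirectProduct.inr (Multiplicative.ofAdd (1 : ZMod m))) n).left j =
        (List.ofFn fun i : Fin s => g ^ (ε i * (n.choose (ks i) : ℤ))).prod) ∧
    (∀ p r : ℕ, p.Prime → g ^ p = 1 → m = p ^ r →
      engel
          (SemidirectProduct.inl (fun x : ZMod m => if x = 0 then g⁻¹ else 1) :
            Wreath G (Multiplicative (ZMod m)) (ZMod m))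
          (SemidirectProduct.inr (Multiplicative.ofAdd (1 : ZMod m))) (p ^ r) = 1) := by
  refine ⟨fun n j => ?_, fun p r hp hg hmr => ?_⟩
  · set S := (range (n + 1)).filter fun k => j + k • (1 : ZMod m) = 0
    refine ⟨S.toList.length, fun i => S.toList[i], fun i => (-1) ^ (n - S.toList[i]),
      fun i => neg_one_pow_eq_or ℤ _, ?_⟩
    rw [engel_inl_single_inr_ofAdd, SemidirectProduct.left_inl, fwdDiff_iter_indicator_eq_sum,
      ← sum_map_toList, ← List.prod_map_zpow_eq_zpow_sum, ← List.ofFn_getElem_eq_map]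
    rfl
  · subst hmr
    rw [engel_inl_single_inr_ofAdd, ← map_one SemidirectProduct.inl]
    congr 1
    funext j
    obtain ⟨c, hc⟩ := prime_dvd_fwdDiff_iter_prime_pow hp r _ j
    rw [hc, zpow_mul, zpow_natCast, inv_pow, hg, inv_one, one_zpow, Pi.one_apply]

/-- In `W = G ≀_X ⟨σ⟩` with `σ` the `m`-cycle on `X = ℤ/mℤ` (acting by
translation), each component of `[(g, 1, …, 1),_n σ]` is a product of powers of
`g` with signed binomial coefficient exponents; in particular, if `g^p = 1` and
`m = p^r`, then `[(g⁻¹, 1, …, 1),_{p^r} σ] = 1`. -/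
theorem stmt8 (m : ℕ) (hm : 0 < m) (G : Type*) [Group G] (g : G) :
    (∀ (n : ℕ) (j : ZMod m), ∃ (s : ℕ) (ks : Fin s → ℕ) (ε : Fin s → ℤ),
      (∀ i, ε i = 1 ∨ ε i = -1) ∧
      (engel
          (SemidirectProduct.inl (fun x : ZMod m => if x = 0 then g else 1) :
            Wreath G (Multiplicative (ZMod m)) (ZMod m))
          (SemidirectProduct.inr (Multiplicative.ofAdd (1 : ZMod m))) n).left j =
        (List.ofFn fun i : Fin s => g ^ (ε i * (n.choose (ks i) : ℤ))).prod) ∧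
    (∀ p r : ℕ, p.Prime → g ^ p = 1 → m = p ^ r →
      engel
          (SemidirectProduct.inl (fun x : ZMod m => if x = 0 then g⁻¹ else 1) :
            Wreath G (Multiplicative (ZMod m)) (ZMod m))
          (SemidirectProduct.inr (Multiplicative.ofAdd (1 : ZMod m))) (p ^ r) = 1) :=
  stmt8_general m G g
end

section
/- Let (A_i)_{i∈ℕ} be a sequence of elementary abelian p-groups, and define W_0 = 1 and W_{n+1} = W_n ≀ A_n (permutational wreath product with A_n acting on itself by right multiplication). Then W_n is a ((p^n − 1)/(p − 1))-Engel group: [g,_{(p^n−1)/(p−1)} h] = 1 for all g, h ∈ W_n. -/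
/-- The action of the top group `T` (acting on itself by right multiplication)
on the base group `T → G` of the permutational wreath product `G ≀ T`. -/
def wreathRφ (G T : Type*) [Group G] [Group T] : T →* MulAut (T → G) where
  toFun t :=
    { toFun := fun f x => f (x * t)
      invFun := fun f x => f (x * t⁻¹)
      left_inv := fun f => funext fun x => by simp
      right_inv := fun f => funext fun x => by simp
      map_mul' := fun f g => rfl }
  map_one' := MulEquiv.ext fun f => funext fun x => by simp
  map_mul' := fun a b => MulEquiv.ext fun f => funext fun x => by
    simp [mul_assoc]

/-- The iterated permutational wreath products `W_0 = 1`,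
`W_{n+1} = W_n ≀ A_n` (bundled with their group structures). -/
def Wrec (A : ℕ → Type) [∀ i, CommGroup (A i)] : ℕ → (T : Type) ×' Group T :=
  fun n =>
    Nat.rec (motive := fun _ => (T : Type) ×' Group T)
      ⟨PUnit, inferInstance⟩
      (fun n ih =>
        letI := ih.2
        ⟨(A n → ih.1) ⋊[wreathRφ ih.1 (A n)] A n, inferInstance⟩) n

/-- The `n`-fold iterated permutational wreath product of `A_0, …, A_{n-1}`. -/
def W (A : ℕ → Type) [∀ i, CommGroup (A i)] (n : ℕ) : Type := (Wrec A n).1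

noncomputable instance (A : ℕ → Type) [∀ i, CommGroup (A i)] (n : ℕ) :
    Group (W A n) := (Wrec A n).2

/-!
Call `G = N₀ ≥ N₁ ≥ ⋯ ≥ N_m = 1` an Engel series for `c ∈ G` if each `N_j` is normalised by `c`
and `N_j / N_{j+1}` is elementary abelian with `[N_j, c] ≤ N_{j+1}`; then `[g,_m c] = 1`. Every
element of `W_n` has an Engel series of length `1 + p + ⋯ + p^(n-1)`, by induction on `n`.

For `c = (f, t) ∈ G ≀ T` the series starts with `G ≀ T ≥ G^T`, since `T` is elementary abelian.
If `d` is the order of `t`, then `c^d` lies in the base group and its coordinates along a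
`t`-orbit are conjugate by partial products of `f`; transporting an Engel series of one coordinate
along the orbit by these products gives a chain of base subgroups `B_j`, normalised by `c`, with
`[B_j, c^p] ≤ B_{j+1}`. Conjugation `σ` by `c` on the elementary abelian layer `B_j / B_{j+1}`
has `σ^p = 1`, so `(σ - 1)^p = σ^p - 1 = 0` in characteristic `p`, and the kernels of the powers
of `σ - 1` refine each layer into `p` Engel steps. Hence the length grows from `m` to `p m + 1`.
-/

open scoped Pointwise
open Subgroup (normalizer mem_normalizer_iff)

section Commutator

variable {G G' : Type*} [Group G] [Group G']

lemma map_pcomm {F : Type*} [FunLike F G G'] [MonoidHomClass F G G'] (φ : F) (x y : G) :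
    φ (pcomm x y) = pcomm (φ x) (φ y) := by
  simp [pcomm]

lemma map_engel {F : Type*} [FunLike F G G'] [MonoidHomClass F G G'] (φ : F) (x c : G) (r : ℕ) :
    φ (engel x c r) = engel (φ x) (φ c) r := by
  induction r with
  | zero => rfl
  | succ r ih => simp only [engel, map_pcomm, ih]

lemma engel_succ'_s9 (x c : G) (r : ℕ) : engel x c (r + 1) = engel (pcomm x c) c r := by
  induction r with
  | zero => rfl
  | succ r ih => exact congrArg (pcomm · c) ih

lemma pcomm_mem_of_mem_normalizer {H : Subgroup G} {x c : G} (hc : c ∈ normalizer H)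
    (hx : x ∈ H) : pcomm x c ∈ H := by
  have hconj : c⁻¹ * x * c ∈ H := by
    simpa using (mem_normalizer_iff.mp (inv_mem hc) x).mp hx
  simpa [pcomm, mul_assoc] using mul_mem (inv_mem hx) hconj

lemma engel_mem_of_mem_normalizer {H : Subgroup G} {x c : G} (hc : c ∈ normalizer H)
    (hx : x ∈ H) (r : ℕ) : engel x c r ∈ H := by
  induction r with
  | zero => exact hx
  | succ r ih => exact pcomm_mem_of_mem_normalizer hc ih

lemma conj_smul_eq_self_of_mem_normalizer {H : Subgroup G} {g : G} (hg : g ∈ normalizer H) :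
    MulAut.conj g • H = H :=
  Subgroup.mem_normalizer_iff_map_conj_eq.mp hg

lemma pcomm_pow_mem {H K : Subgroup G} {c : G} (hK : c ∈ normalizer K)
    (hHK : ∀ x ∈ H, pcomm x c ∈ K) {x : G} (hx : x ∈ H) (k : ℕ) : pcomm x (c ^ k) ∈ K := by
  induction k with
  | zero => simp [pcomm]
  | succ k ih =>
    have h : pcomm x (c ^ (k + 1)) = pcomm x c * (c⁻¹ * pcomm x (c ^ k) * c) := by
      simp only [pcomm, pow_succ]; group
    rw [h]
    refine mul_mem (hHK x hx) ?_
    simpa using (mem_normalizer_iff.mp (inv_mem hK) _).mp ih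

end Commutator

lemma AddMonoid.End.sub_one_pow_eq_zero_of_pow_eq_one {V : Type*} [AddCommGroup V] {p : ℕ}
    (hp : p.Prime) (hV : ∀ v : V, p • v = 0) {σ : AddMonoid.End V} (hσ : σ ^ p = 1) :
    (σ - 1) ^ p = 0 := by
  have hp0 : (p : AddMonoid.End V) = 0 := by
    ext v
    simpa using hV v
  have h := (Commute.one_right (σ - 1)).add_pow_prime_eq' hp
  rw [sub_add_cancel, hσ, one_pow, hp0, zero_mul, add_zero] at h
  simpa using h.symm

section EngelSeries

variable {G : Type*} [Group G]

structure IsEngelStep (p : ℕ) (c : G) (H K : Subgroup G) : Prop where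
  le : K ≤ H
  mem_normalizer : c ∈ normalizer H
  pcomm_mem : ∀ x ∈ H, ∀ y ∈ H, pcomm x y ∈ K
  pow_mem : ∀ x ∈ H, x ^ p ∈ K
  pcomm_right_mem : ∀ x ∈ H, pcomm x c ∈ K

inductive EngelSeries (p : ℕ) (c : G) : ℕ → Subgroup G → Subgroup G → Prop
  | refl (H : Subgroup G) : EngelSeries p c 0 H H
  | cons {m : ℕ} {H K L : Subgroup G} :
      IsEngelStep p c H K → EngelSeries p c m K L → EngelSeries p c (m + 1) H L

def HasEngelSeries (G : Type*) [Group G] (p m : ℕ) : Prop :=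
  ∀ c : G, EngelSeries p c m ⊤ ⊥

variable {p m n : ℕ} {c : G} {H K L : Subgroup G}

lemma isEngelStep_bot : IsEngelStep p c ⊥ ⊥ where
  le := le_rfl
  mem_normalizer := mem_normalizer_iff.mpr (by simp)
  pcomm_mem := by simp [pcomm]
  pow_mem := by simp
  pcomm_right_mem := by simp [pcomm]

lemma IsEngelStep.smul (h : IsEngelStep p c H K) (φ : MulAut G) :
    IsEngelStep p (φ c) (φ • H) (φ • K) := by
  have mem : ∀ {S : Subgroup G} {x : G}, x ∈ φ • S ↔ φ⁻¹ x ∈ S := fun {S x} =>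
    Subgroup.mem_pointwise_smul_iff_inv_smul_mem
  refine ⟨Subgroup.pointwise_smul_le_pointwise_smul_iff.mpr h.le, ?_, ?_, ?_, ?_⟩
  · refine mem_normalizer_iff.mpr fun x => ?_
    simpa [mem] using mem_normalizer_iff.mp h.mem_normalizer (φ⁻¹ x)
  · simp only [mem, map_pcomm]
    exact fun x hx y hy => h.pcomm_mem _ hx _ hy
  · simp only [mem, map_pow]
    exact fun x hx => h.pow_mem _ hx
  · simp only [mem, map_pcomm, MulAut.inv_apply_self]
    exact fun x hx => h.pcomm_right_mem _ hx

namespace EngelSeries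

lemma trans (h₁ : EngelSeries p c m H K) (h₂ : EngelSeries p c n K L) :
    EngelSeries p c (m + n) H L := by
  induction h₁ with
  | refl => simpa using h₂
  | cons hs _ ih => rw [Nat.add_right_comm]; exact .cons hs (ih h₂)

lemma engel_mem (h : EngelSeries p c m H K) {x : G} (hx : x ∈ H) : engel x c m ∈ K := by
  induction h generalizing x with
  | refl => exact hx
  | cons hs _ ih => rw [engel_succ'_s9]; exact ih (hs.pcomm_right_mem x hx)

lemma exists_chain (h : EngelSeries p c m H ⊥) :
    ∃ N : ℕ → Subgroup G, N 0 = H ∧ N m = ⊥ ∧ ∀ j, IsEngelStep p c (N j) (N (j + 1)) := by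
  generalize hL : (⊥ : Subgroup G) = L at h
  induction h with
  | refl L => exact ⟨fun _ => L, rfl, rfl, fun _ => hL ▸ isEngelStep_bot⟩
  | @cons m H K L hs _ ih =>
    obtain ⟨N, hN0, hNm, hN⟩ := ih hL
    refine ⟨fun j => Nat.casesOn j H N, rfl, hNm, fun j => ?_⟩
    cases j with
    | zero => rw [← hN0] at hs; exact hs
    | succ j => exact hN j

end EngelSeries

lemma HasEngelSeries.engel_eq_one (h : HasEngelSeries G p m) (g c : G) : engel g c m = 1 := by
  simpa using (h c).engel_mem (Subgroup.mem_top g)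

lemma hasEngelSeries_zero_of_subsingleton [Subsingleton G] (p : ℕ) : HasEngelSeries G p 0 := by
  intro _
  rw [Subsingleton.elim (⊤ : Subgroup G) ⊥]
  exact .refl ⊥

end EngelSeries

section ElemAbSection

universe u

variable {G : Type u} [Group G] {p : ℕ} {c : G} {B B' : Subgroup G}

structure IsElemAbSection (p : ℕ) (c : G) (B B' : Subgroup G) : Prop where
  le : B' ≤ B
  mem_normalizer : c ∈ normalizer B
  mem_normalizer' : c ∈ normalizer B'
  pcomm_mem : ∀ x ∈ B, ∀ y ∈ B, pcomm x y ∈ B'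
  pow_mem : ∀ x ∈ B, x ^ p ∈ B'
  pcomm_pow_mem : ∀ x ∈ B, pcomm x (c ^ p) ∈ B'

namespace IsElemAbSection

theorem exists_quotient_model (S : IsElemAbSection p c B B') :
    ∃ (V : Type u) (_ : AddCommGroup V) (π : G → V) (σ : AddMonoid.End V),
      (∀ v, ∃ x ∈ B, π x = v) ∧ ∀ x ∈ B, (π x = 0 ↔ x ∈ B') ∧ π (c⁻¹ * x * c) = σ (π x) ∧
        ∀ y ∈ B, π (x * y) = π x + π y := by
  let N := B'.subgroupOf B
  have hcomm (x y : B) : pcomm (x : G) y ∈ B' := S.pcomm_mem _ x.2 _ y.2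
  have : N.Normal := ⟨fun n hn g => by
    have h : ((g * n * g⁻¹ : B) : G) = pcomm (g⁻¹ : B) (n⁻¹ : B) * n := by
      simp only [pcomm, Subgroup.coe_mul, Subgroup.coe_inv]; group
    rw [Subgroup.mem_subgroupOf, h]
    exact mul_mem (hcomm _ _) hn⟩
  let : CommGroup (B ⧸ N) :=
    { mul_comm := fun a b => by
        induction a using QuotientGroup.induction_on with | H x =>
        induction b using QuotientGroup.induction_on with | H y =>
        rw [← QuotientGroup.mk_mul, ← QuotientGroup.mk_mul, QuotientGroup.eq,
          Subgroup.mem_subgroupOf]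
        convert hcomm y x using 1
        simp only [pcomm, Subgroup.coe_mul, Subgroup.coe_inv]; group }
  let γ : B →* B := (B.normalizerMonoidHom ⟨c⁻¹, inv_mem S.mem_normalizer⟩).toMonoidHom
  have hγ (x : B) : (γ x : G) = c⁻¹ * x * c := by simp [γ]
  let σ : B ⧸ N →* B ⧸ N := QuotientGroup.map N N γ fun x hx => by
    simpa [N, Subgroup.mem_subgroupOf, hγ] using
      (mem_normalizer_iff.mp (inv_mem S.mem_normalizer') x).mp hx
  classical
  let π : G → Additive (B ⧸ N) := fun x =>
    if hx : x ∈ B then .ofMul (QuotientGroup.mk ⟨x, hx⟩) else 0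
  have hπ (x : B) : π x = .ofMul (QuotientGroup.mk x) := dif_pos x.2
  refine ⟨_, inferInstance, π, σ.toAdditive, fun v => ?_, fun x hx => ?_⟩
  · obtain ⟨x, hx⟩ := QuotientGroup.mk_surjective v.toMul
    exact ⟨x, x.2, by rw [hπ, hx]; rfl⟩
  lift x to B using hx
  refine ⟨?_, ?_, fun y hy => ?_⟩
  · rw [hπ, ofMul_eq_zero, QuotientGroup.eq_one_iff, Subgroup.mem_subgroupOf]
  · rw [← hγ, hπ, hπ]; rfl
  · lift y to B using hy
    rw [← Subgroup.coe_mul, hπ, hπ, hπ]; rfl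

theorem exists_nilpotent_model (S : IsElemAbSection p c B B') (hp : p.Prime) :
    ∃ (V : Type u) (_ : AddCommGroup V) (π : G → V) (δ : AddMonoid.End V), δ ^ p = 0 ∧
      ∀ x ∈ B, (π x = 0 ↔ x ∈ B') ∧ π (pcomm x c) = δ (π x) ∧
        ∀ y ∈ B, π (x * y) = π x + π y := by
  obtain ⟨V, _, π, σ, hsurj, hπ⟩ := S.exists_quotient_model
  have hconj {x : G} (hx : x ∈ B) : c⁻¹ * x * c ∈ B := by
    simpa using (mem_normalizer_iff.mp (inv_mem S.mem_normalizer) x).mp hx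
  have hmul {x y : G} (hx : x ∈ B) (hy : y ∈ B) : π (x * y) = π x + π y := (hπ x hx).2.2 y hy
  have hpow {x : G} (hx : x ∈ B) (k : ℕ) : π (x ^ k) = k • π x := by
    induction k with
    | zero => simpa using (hπ 1 (one_mem B)).1.mpr (one_mem B')
    | succ k ih => rw [pow_succ, hmul (Subgroup.pow_mem _ hx k) hx, ih, succ_nsmul]
  have hσpow (k : ℕ) : ∀ x ∈ B, (σ ^ k) (π x) = π ((c ^ k)⁻¹ * x * c ^ k) := by
    induction k with
    | zero => simp
    | succ k ih =>
      intro x hx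
      rw [pow_succ, AddMonoid.End.coe_mul, Function.comp_apply, ← (hπ x hx).2.1, ih _ (hconj hx)]
      simp only [pow_succ', mul_inv_rev, mul_assoc]
  have hσ : σ ^ p = 1 := by
    ext v
    obtain ⟨x, hx, rfl⟩ := hsurj v
    have h : (c ^ p)⁻¹ * x * c ^ p = x * pcomm x (c ^ p) := by simp [pcomm, mul_assoc]
    have hcp := pcomm_mem_of_mem_normalizer (Subgroup.pow_mem _ S.mem_normalizer p) hx
    rw [hσpow p x hx, h, hmul hx hcp,
      (hπ _ (S.le (S.pcomm_pow_mem x hx))).1.mpr (S.pcomm_pow_mem x hx)]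
    simp
  have htors (v : V) : p • v = 0 := by
    obtain ⟨x, hx, rfl⟩ := hsurj v
    rw [← hpow hx, (hπ _ (Subgroup.pow_mem _ hx p)).1.mpr (S.pow_mem x hx)]
  refine ⟨V, inferInstance, π, σ - 1, AddMonoid.End.sub_one_pow_eq_zero_of_pow_eq_one hp htors hσ,
    fun x hx => ⟨(hπ x hx).1, ?_, fun y hy => hmul hx hy⟩⟩
  have h := hmul hx (pcomm_mem_of_mem_normalizer S.mem_normalizer hx)
  rw [show x * pcomm x c = c⁻¹ * x * c by simp [pcomm, mul_assoc], (hπ x hx).2.1] at h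
  change _ = σ (π x) - π x
  rw [h, add_sub_cancel_left]

theorem exists_engelKer (S : IsElemAbSection p c B B') (hp : p.Prime) :
    ∃ K : ℕ → Subgroup G, (∀ r x, x ∈ K r ↔ x ∈ B ∧ engel x c r ∈ B') ∧ K p = B := by
  obtain ⟨V, _, π, δ, hδ, hπ⟩ := S.exists_nilpotent_model hp
  have hmul {x y : G} (hx : x ∈ B) (hy : y ∈ B) : π (x * y) = π x + π y := (hπ x hx).2.2 y hy
  have hinv {x : G} (hx : x ∈ B) : π x⁻¹ = -π x := by
    rw [eq_neg_iff_add_eq_zero, ← hmul (inv_mem hx) hx, inv_mul_cancel,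
      (hπ 1 (one_mem B)).1.mpr (one_mem B')]
  have hengel {x : G} (hx : x ∈ B) (r : ℕ) : engel x c r ∈ B' ↔ (δ ^ r) (π x) = 0 := by
    have hB (r : ℕ) := engel_mem_of_mem_normalizer S.mem_normalizer hx r
    suffices π (engel x c r) = (δ ^ r) (π x) by rw [← this, (hπ _ (hB r)).1]
    induction r with
    | zero => rfl
    | succ r ih => rw [engel, (hπ _ (hB r)).2.1, ih, pow_succ']; rfl
  refine ⟨fun r =>
    { carrier := {x | x ∈ B ∧ engel x c r ∈ B'}
      one_mem' := ⟨one_mem B, engel_mem_of_mem_normalizer S.mem_normalizer' (one_mem B') r⟩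
      mul_mem' := fun {x y} ⟨hx, hx'⟩ ⟨hy, hy'⟩ => ⟨mul_mem hx hy, by
        rw [hengel (mul_mem hx hy), hmul hx hy, map_add, (hengel hx r).mp hx',
          (hengel hy r).mp hy', add_zero]⟩
      inv_mem' := fun {x} ⟨hx, hx'⟩ => ⟨inv_mem hx, by
        rw [hengel (inv_mem hx), hinv hx, map_neg, (hengel hx r).mp hx', neg_zero]⟩ },
    fun _ _ => Iff.rfl, ?_⟩
  ext x
  exact ⟨And.left, fun hx => ⟨hx, (hengel hx p).mpr (by rw [hδ]; rfl)⟩⟩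

theorem isEngelStep_of_forall_mem_iff (S : IsElemAbSection p c B B') {K : ℕ → Subgroup G}
    (hK : ∀ r x, x ∈ K r ↔ x ∈ B ∧ engel x c r ∈ B') (r : ℕ) :
    IsEngelStep p c (K (r + 1)) (K r) := by
  have hB' : B' ≤ K r := fun x hx =>
    (hK r x).mpr ⟨S.le hx, engel_mem_of_mem_normalizer S.mem_normalizer' hx r⟩
  refine ⟨fun x hx => ?_, mem_normalizer_iff.mpr fun x => ?_,
    fun x hx y hy => hB' (S.pcomm_mem x ((hK _ x).mp hx).1 y ((hK _ y).mp hy).1),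
    fun x hx => hB' (S.pow_mem x ((hK _ x).mp hx).1), fun x hx => ?_⟩
  · rw [hK] at hx ⊢
    exact ⟨hx.1, pcomm_mem_of_mem_normalizer S.mem_normalizer' hx.2⟩
  · have h := map_engel (MulAut.conj c) x c (r + 1)
    simp only [MulAut.conj_apply, mul_inv_cancel_right] at h
    rw [hK, hK, ← h]
    exact and_congr (mem_normalizer_iff.mp S.mem_normalizer x)
      (mem_normalizer_iff.mp S.mem_normalizer' _)
  · rw [hK] at hx ⊢
    exact ⟨pcomm_mem_of_mem_normalizer S.mem_normalizer hx.1, (engel_succ'_s9 x c r) ▸ hx.2⟩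

theorem engelSeries (S : IsElemAbSection p c B B') (hp : p.Prime) : EngelSeries p c p B B' := by
  obtain ⟨K, hK, hKp⟩ := S.exists_engelKer hp
  have hK0 : K 0 = B' := by
    ext x
    exact (hK 0 x).trans ⟨And.right, fun hx => ⟨S.le hx, hx⟩⟩
  have hseries (r : ℕ) : EngelSeries p c r (K r) B' := by
    induction r with
    | zero => rw [hK0]; exact .refl B'
    | succ r ih => exact .cons (S.isEngelStep_of_forall_mem_iff hK r) ih
  exact hKp ▸ hseries p

end IsElemAbSection

end ElemAbSection

section Wreath

variable {G T : Type*} [Group G] [Group T]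

local notation:70 G:71 " ≀ " T:71 => (T → G) ⋊[wreathRφ G T] T

open SemidirectProduct

@[simp]
lemma wreathRφ_symm_apply (t : T) (f : T → G) (x : T) :
    (wreathRφ G T t).symm f x = f (x * t⁻¹) := rfl

lemma wreath_left_mul_apply (a b : G ≀ T) (x : T) :
    (a * b).left x = a.left x * b.left (x * a.right) := rfl

lemma wreath_right_pow (a : G ≀ T) (k : ℕ) : (a ^ k).right = a.right ^ k :=
  map_pow (rightHom : G ≀ T →* T) a k

lemma wreath_left_pow_add_apply (a : G ≀ T) (k l : ℕ) (x : T) :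
    (a ^ (k + l)).left x = (a ^ k).left x * (a ^ l).left (x * a.right ^ k) := by
  rw [pow_add, wreath_left_mul_apply, wreath_right_pow]

lemma wreath_eq_inl {a : G ≀ T} (ha : a.right = 1) : a = inl a.left :=
  SemidirectProduct.ext rfl ha

lemma wreath_pcomm_left_apply {a b : G ≀ T} (ha : a.right = 1) (hb : b.right = 1) (x : T) :
    (pcomm a b).left x = pcomm (a.left x) (b.left x) := by
  rw [wreath_eq_inl ha, wreath_eq_inl hb, ← map_pcomm, left_inl]
  rfl

lemma wreath_pow_left_apply {a : G ≀ T} (ha : a.right = 1) (k : ℕ) (x : T) :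
    (a ^ k).left x = a.left x ^ k := by
  rw [wreath_eq_inl ha, ← map_pow, left_inl]
  rfl

def basePart (M : T → Subgroup G) : Subgroup (G ≀ T) :=
  (Subgroup.pi Set.univ M).map inl

lemma mem_basePart {M : T → Subgroup G} {a : G ≀ T} :
    a ∈ basePart M ↔ a.right = 1 ∧ ∀ x, a.left x ∈ M x := by
  refine ⟨?_, fun ⟨ha, hM⟩ => ⟨a.left, fun x _ => hM x, (wreath_eq_inl ha).symm⟩⟩
  rintro ⟨f, hf, rfl⟩
  exact ⟨right_inl f, fun x => hf x trivial⟩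

lemma basePart_bot : basePart (fun _ => ⊥ : T → Subgroup G) = ⊥ := by
  ext a
  simp only [mem_basePart, Subgroup.mem_bot, SemidirectProduct.ext_iff, one_left, one_right,
    funext_iff, Pi.one_apply]
  exact and_comm

lemma mem_normalizer_basePart {M : T → Subgroup G} {c : G ≀ T}
    (hM : ∀ y, M (y * c.right) = MulAut.conj (c.left y)⁻¹ • M y) :
    c ∈ normalizer (basePart M) := by
  refine mem_normalizer_iff.mpr fun a => ?_
  simp only [mem_basePart, mul_right, inv_right, conj_eq_one_iff]
  refine and_congr_right fun ha => ?_
  have hconj (y : T) : (c * a * c⁻¹).left y = c.left y * a.left (y * c.right) * (c.left y)⁻¹ := by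
    simp [wreath_left_mul_apply, ha]
  have hmem (y : T) (g : G) : c.left y * g * (c.left y)⁻¹ ∈ M y ↔ g ∈ M (y * c.right) := by
    rw [hM, Subgroup.mem_pointwise_smul_iff_inv_smul_mem]
    simp
  simp only [hconj, hmem]
  exact (Equiv.mulRight c.right).forall_congr_right.symm

variable {p : ℕ}

lemma isElemAbSection_basePart {M M' : T → Subgroup G} {c : G ≀ T} {d : ℕ}
    (hd : c.right ^ d = 1) (hdp : d ∣ p)
    (hM : ∀ y, M (y * c.right) = MulAut.conj (c.left y)⁻¹ • M y)
    (hM' : ∀ y, M' (y * c.right) = MulAut.conj (c.left y)⁻¹ • M' y)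
    (hstep : ∀ y, IsEngelStep p ((c ^ d).left y) (M y) (M' y)) :
    IsElemAbSection p c (basePart M) (basePart M') := by
  have hcd : (c ^ d).right = 1 := by rw [wreath_right_pow, hd]
  have hpcomm : ∀ a ∈ basePart M, pcomm a (c ^ d) ∈ basePart M' := by
    intro a ha
    rw [mem_basePart] at ha ⊢
    refine ⟨by simp [ha.1, hcd, pcomm], fun y => ?_⟩
    rw [wreath_pcomm_left_apply ha.1 hcd]
    exact (hstep y).pcomm_right_mem _ (ha.2 y)
  refine ⟨Subgroup.map_mono fun f hf y _ => (hstep y).le (hf y trivial),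
    mem_normalizer_basePart hM, mem_normalizer_basePart hM', fun a ha b hb => ?_,
    fun a ha => ?_, fun a ha => ?_⟩
  · rw [mem_basePart] at ha hb ⊢
    refine ⟨by simp [ha.1, hb.1, pcomm], fun y => ?_⟩
    rw [wreath_pcomm_left_apply ha.1 hb.1]
    exact (hstep y).pcomm_mem _ (ha.2 y) _ (hb.2 y)
  · rw [mem_basePart] at ha ⊢
    refine ⟨by rw [wreath_right_pow, ha.1, one_pow], fun y => ?_⟩
    rw [wreath_pow_left_apply ha.1]
    exact (hstep y).pow_mem _ (ha.2 y)
  · rw [← Nat.mul_div_cancel' hdp, pow_mul]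
    exact pcomm_pow_mem (Subgroup.pow_mem _ (mem_normalizer_basePart hM') d) hpcomm ha _

lemma isEngelStep_top_basePart {T : Type*} [CommGroup T] (hT : ∀ t : T, t ^ p = 1)
    (c : G ≀ T) : IsEngelStep p c ⊤ (basePart fun _ => ⊤) := by
  have hbase (a : G ≀ T) (ha : a.right = 1) : a ∈ basePart fun _ => ⊤ :=
    mem_basePart.mpr ⟨ha, fun _ => Subgroup.mem_top _⟩
  have hcomm (a b : G ≀ T) : (pcomm a b).right = 1 := by
    simp [pcomm, mul_comm b.right⁻¹, mul_assoc]
  exact ⟨le_top, mem_normalizer_iff.mpr (by simp), fun a _ b _ => hbase _ (hcomm a b),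
    fun a _ => hbase _ (by rw [wreath_right_pow, hT]), fun a _ => hbase _ (hcomm a c)⟩

lemma exists_rep_mul_pow {t : T} (ht : IsOfFinOrder t) :
    ∃ (rep : T → T) (ρ : T → ℕ), ∀ y, rep (y * t) = rep y ∧ y = rep y * t ^ ρ y := by
  have hrep (y : T) : ∃ k : ℕ, y = (y : T ⧸ Subgroup.zpowers t).out * t ^ k := by
    obtain ⟨h, hh⟩ := QuotientGroup.mk_out_eq_mul (Subgroup.zpowers t) y
    obtain ⟨k, hk⟩ := ht.mem_powers_iff_mem_zpowers.mpr (inv_mem h.2)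
    exact ⟨k, by rw [hh, show t ^ k = (h : T)⁻¹ from hk, mul_inv_cancel_right]⟩
  choose ρ hρ using hrep
  refine ⟨fun y => (y : T ⧸ Subgroup.zpowers t).out, ρ, fun y => ⟨?_, hρ y⟩⟩
  dsimp only
  rw [QuotientGroup.mk_mul_of_mem y (Subgroup.mem_zpowers t)]

theorem exists_equivariant_chains {m : ℕ} (hG : HasEngelSeries G p m) (c : G ≀ T)
    (ht : IsOfFinOrder c.right) :
    ∃ N : T → ℕ → Subgroup G, (∀ y, N y 0 = ⊤) ∧ (∀ y, N y m = ⊥) ∧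
      (∀ y j, IsEngelStep p ((c ^ orderOf c.right).left y) (N y j) (N y (j + 1))) ∧
      ∀ y j, N (y * c.right) j = MulAut.conj (c.left y)⁻¹ • N y j := by
  set d := orderOf c.right
  choose C hC0 hCm hCstep using fun g : G => (hG g).exists_chain
  obtain ⟨rep, ρ, hrep⟩ := exists_rep_mul_pow ht
  have htd : c.right ^ d = 1 := pow_orderOf_eq_one c.right
  -- the series of the coordinate of `c ^ d` at `r`, transported to the point `r * c.right ^ k`
  let P (r : T) (k j : ℕ) : Subgroup G := MulAut.conj ((c ^ k).left r)⁻¹ • C ((c ^ d).left r) j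
  have hP (r : T) (j : ℕ) : Function.Periodic (P r · j) d := fun k => by
    simp only [P, add_comm k, wreath_left_pow_add_apply, htd, mul_one, mul_inv_rev, map_mul,
      mul_smul, conj_smul_eq_self_of_mem_normalizer (inv_mem (hCstep _ j).mem_normalizer)]
  have hPeq (y : T) (k j : ℕ) (hk : y = rep y * c.right ^ k) :
      P (rep y) (ρ y) j = P (rep y) k j := by
    rw [← (hP _ j).map_mod_nat, ← (hP _ j).map_mod_nat k]
    congr 1
    exact pow_eq_pow_iff_modEq.mp (mul_left_cancel ((hrep y).2.symm.trans hk))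
  refine ⟨fun y => P (rep y) (ρ y), fun y => by simp only [P, hC0, Subgroup.Normal.conj_smul_eq_self],
    fun y => by simp only [P, hCm, Subgroup.smul_bot], fun y j => ?_, fun y j => ?_⟩
  · have hη : (c ^ d).left y = MulAut.conj ((c ^ ρ y).left (rep y))⁻¹ ((c ^ d).left (rep y)) := by
      have h := wreath_left_pow_add_apply c (ρ y) d (rep y)
      rw [add_comm, wreath_left_pow_add_apply, htd, mul_one, ← (hrep y).2] at h
      simp [h, mul_assoc]
    rw [hη]
    exact (hCstep _ j).smul _
  · have hyt : y * c.right = rep (y * c.right) * c.right ^ (ρ y + 1) := by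
      rw [(hrep y).1, pow_succ, ← mul_assoc, ← (hrep y).2]
    show P _ _ j = _
    rw [hPeq _ _ j hyt, (hrep y).1]
    simp only [P, wreath_left_pow_add_apply, pow_one, ← (hrep y).2, mul_inv_rev, map_mul, mul_smul]

theorem HasEngelSeries.wreath {T : Type*} [CommGroup T] {m : ℕ} (hp : p.Prime)
    (hT : ∀ t : T, t ^ p = 1) (hG : HasEngelSeries G p m) :
    HasEngelSeries (G ≀ T) p (p * m + 1) := by
  intro c
  obtain ⟨N, hN0, hNm, hstep, hshift⟩ :=
    exists_equivariant_chains hG c (isOfFinOrder_iff_pow_eq_one.mpr ⟨p, hp.pos, hT _⟩)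
  have hlayer (j : ℕ) : EngelSeries p c p (basePart (N · j)) (basePart (N · (j + 1))) :=
    (isElemAbSection_basePart (pow_orderOf_eq_one _) (orderOf_dvd_of_pow_eq_one (hT _))
      (hshift · j) (hshift · (j + 1)) (hstep · j)).engelSeries hp
  have hbase (k : ℕ) : EngelSeries p c (p * k) (basePart (N · 0)) (basePart (N · k)) := by
    induction k with
    | zero => exact .refl _
    | succ k ih => exact ih.trans (hlayer k)
  have hm := hbase m
  simp only [hN0, hNm, basePart_bot] at hm
  exact .cons (isEngelStep_top_basePart hT c) hm

end Wreath

theorem hasEngelSeries_W {p : ℕ} (hp : p.Prime) (A : ℕ → Type) [∀ i, CommGroup (A i)]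
    (hexp : ∀ (i : ℕ) (a : A i), a ^ p = 1) (n : ℕ) :
    HasEngelSeries (W A n) p (∑ i ∈ Finset.range n, p ^ i) := by
  induction n with
  | zero =>
    have : Subsingleton (W A 0) := inferInstanceAs (Subsingleton PUnit)
    exact hasEngelSeries_zero_of_subsingleton p
  | succ n ih =>
    rw [geom_sum_succ]
    exact HasEngelSeries.wreath (G := W A n) (T := A n) hp (hexp n) ih

/-- If each `A_i` is an elementary abelian `p`-group, the iterated wreath
product `W_n` is a `((p^n − 1)/(p − 1))`-Engel group. -/
theorem stmt9 (p : ℕ) (hp : p.Prime) (A : ℕ → Type) [∀ i, CommGroup (A i)]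
    (hexp : ∀ (i : ℕ) (a : A i), a ^ p = 1) (n : ℕ) (g h : W A n) :
    engel g h ((p ^ n - 1) / (p - 1)) = 1 := by
  rw [← Nat.geomSum_eq hp.two_le]
  exact (hasEngelSeries_W hp A hexp n).engel_eq_one g h
end

section
/- Let p be a prime, r ∈ ℕ, X = C_p^r with generating set Ẽ = ∪_i ⟨e_i⟩ for a basis {e_1,…,e_r}. Let T be the p^r-regular rooted tree over the constant alphabet X, and let b ∈ Aut(T) be the automorphism fixing the first level, defined recursively by b|_{id} = b, b|_{v_i} = e_i for a fixed basis V = {v_1,…,v_r} (with each v_i an element of maximal Ẽ-word length r in X acting on the first letter), and b|_x = id otherwise. Then b has order p. -/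
/-! On a string `1ᵏ x y w` with `x = vᵢ`, the `n`-th iterate of `b` only changes `y` into
`y eᵢⁿ`, and it fixes every other string. Hence `bᵖ = id` because `eᵢᵖ = 1`, while `b` moves
the vertex `vᵢ 1` because `eᵢ ≠ 1`. -/

/-- Word length of `g` with respect to a generating set `S`. -/
noncomputable def wordLength {G : Type*} [Group G] (S : Set G) (g : G) : ℕ :=
  sInf {n | ∃ l : List G, (∀ x ∈ l, x ∈ S ∪ S⁻¹) ∧ l.length = n ∧ l.prod = g}

/-- The action on the regular rooted tree over the alphabet `X` (vertices are
strings, i.e. lists) of the automorphism `b` defined recursively by the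
sections `b|_{id} = b`, `b|_{v_i} = e_i` (each `e_i` acting by right
multiplication on the first letter) and `b|_x = id` otherwise. It fixes the
first level. -/
noncomputable def bAct {X : Type*} [Group X] [DecidableEq X] {r : ℕ}
    (v e : Fin r → X) : List X → List X
  | [] => []
  | x :: l =>
    if x = 1 then x :: bAct v e l
    else if h : ∃ i, v i = x then
      x :: (match l with
            | [] => ([] : List X)
            | y :: l' => (y * e h.choose) :: l')
    else x :: l

theorem wordLength_one {G : Type*} [Group G] (S : Set G) : wordLength S 1 = 0 :=
  Nat.eq_zero_of_le_zero <| Nat.sInf_le ⟨[], by simp, rfl, rfl⟩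

section

variable {X : Type*} [Group X] [DecidableEq X] {r : ℕ} (v e : Fin r → X)

theorem bAct_cons_one (l : List X) : bAct v e (1 :: l) = 1 :: bAct v e l := by
  simp [bAct]

theorem bAct_cons_of_not_exists {x : X} (hx : x ≠ 1) (h : ¬∃ i, v i = x) (l : List X) :
    bAct v e (x :: l) = x :: l := by
  simp [bAct, hx, h]

theorem bAct_singleton {x : X} (hx : x ≠ 1) : bAct v e [x] = [x] := by
  by_cases h : ∃ i, v i = x <;> simp [bAct, hx, h]

theorem bAct_cons_cons {x : X} (hx : x ≠ 1) (h : ∃ i, v i = x) (y : X) (l : List X) :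
    bAct v e (x :: y :: l) = x :: (y * e h.choose) :: l := by
  simp [bAct, hx, h]

theorem bAct_iterate_cons_one (n : ℕ) (l : List X) :
    (bAct v e)^[n] (1 :: l) = 1 :: (bAct v e)^[n] l := by
  induction n with
  | zero => rfl
  | succ n ih => rw [Function.iterate_succ_apply', ih, bAct_cons_one, Function.iterate_succ_apply']

theorem bAct_iterate_cons_cons {x : X} (hx : x ≠ 1) (h : ∃ i, v i = x) (y : X) (l : List X)
    (n : ℕ) : (bAct v e)^[n] (x :: y :: l) = x :: (y * e h.choose ^ n) :: l := by
  induction n with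
  | zero => simp
  | succ n ih => rw [Function.iterate_succ_apply', ih, bAct_cons_cons v e hx h, pow_succ, mul_assoc]

theorem bAct_iterate_eq_id {n : ℕ} (he : ∀ i, e i ^ n = 1) : (bAct v e)^[n] = id := by
  funext l
  induction l with
  | nil => exact Function.iterate_fixed rfl n
  | cons x l ih =>
    by_cases hx : x = 1
    · rw [hx, bAct_iterate_cons_one, ih, id, id]
    by_cases h : ∃ i, v i = x
    · cases l with
      | nil => exact Function.iterate_fixed (bAct_singleton v e hx) n
      | cons y l => rw [bAct_iterate_cons_cons v e hx h, he, mul_one, id]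
    · exact Function.iterate_fixed (bAct_cons_of_not_exists v e hx h l) n

theorem bAct_ne_id {i : Fin r} (hv : v i ≠ 1) (he : ∀ j, e j ≠ 1) : bAct v e ≠ id := by
  intro h
  have h_fix := congrFun h [v i, 1]
  rw [bAct_cons_cons v e hv ⟨i, rfl⟩, id, List.cons.injEq, List.cons.injEq, one_mul] at h_fix
  exact he _ h_fix.2.1

end

theorem stmt16_general (p r : ℕ) (hp : p.Prime) (hr : 0 < r)
    (v : Fin r → Multiplicative (Fin r → ZMod p))
    (hvlen : ∀ i : Fin r,
      wordLength (⋃ j : Fin r,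
        (Subgroup.zpowers
          (Multiplicative.ofAdd (Pi.single j (1 : ZMod p)) :
            Multiplicative (Fin r → ZMod p)) :
          Set (Multiplicative (Fin r → ZMod p)))) (v i) = r) :
    (bAct v (fun i => Multiplicative.ofAdd (Pi.single i (1 : ZMod p))))^[p] = id ∧
      bAct v (fun i => Multiplicative.ofAdd (Pi.single i (1 : ZMod p))) ≠ id := by
  have : Fact p.Prime := ⟨hp⟩
  refine ⟨bAct_iterate_eq_id v _ fun i => ?_, bAct_ne_id v _ (i := ⟨0, hr⟩) ?_ fun i => ?_⟩
  · rw [← ofAdd_nsmul, ← Pi.single_smul, nsmul_one, ZMod.natCast_self, Pi.single_zero, ofAdd_zero]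
  · intro hv
    have h_len := hvlen ⟨0, hr⟩
    rw [hv, wordLength_one] at h_len
    omega
  · simp

/-- Let `X = C_p^r` with generators `e_i` and let `V = {v_1, …, v_r}` be a basis
of `X` consisting of elements of maximal word length `r` with respect to
`Ẽ = ∪_i ⟨e_i⟩`. Then the automorphism `b` of the `p^r`-regular rooted tree
defined by the sections `b|_{id} = b`, `b|_{v_i} = e_i`, `b|_x = id` has order
`p`. -/
theorem stmt16 (p r : ℕ) (hp : p.Prime) (hr : 0 < r)
    (v : Fin r → Multiplicative (Fin r → ZMod p))
    (hvinj : Function.Injective v)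
    (hvbasis : Subgroup.closure (Set.range v) = ⊤)
    (hvlen : ∀ i : Fin r,
      wordLength (⋃ j : Fin r,
        (Subgroup.zpowers
          (Multiplicative.ofAdd (Pi.single j (1 : ZMod p)) :
            Multiplicative (Fin r → ZMod p)) :
          Set (Multiplicative (Fin r → ZMod p)))) (v i) = r) :
    (bAct v (fun i => Multiplicative.ofAdd (Pi.single i (1 : ZMod p))))^[p] = id ∧
      bAct v (fun i => Multiplicative.ofAdd (Pi.single i (1 : ZMod p))) ≠ id :=
  stmt16_general p r hp hr v hvlen
end
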